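/- Let Q = B_∞ = {x ∈ ℝⁿ : ‖x‖_∞ ≤ 1} and ψ(x) = ½‖x‖². Then for every ε ≥ 0, P(ERᶜ(ε)) ≥ 1 − exp(−√(2/(πe))·n·ε), and for every ε with 0 ≤ ε ≤ √(πe/2)/(2n), P(ERᶜ(ε)) ≥ n·ε/√(2πe). -/

import Mathlib

/-!
The regularized objective separates over coordinates. If `|gᵢ| < ε`, the `i`-th coordinate of a
minimizer of `P_ε(g)` is `gᵢ / ε`, strictly inside `(-1, 1)`, while a unique solution of `P₀(g)`
has `i`-th coordinate `sign gᵢ = ±1`. So exact regularization forces `|gᵢ| ≥ ε` for every `i`, and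
`P(ER(ε)) ≤ q(ε)ⁿ` with `q(ε) = P(|g₁| ≥ ε)`. The density `φ` of `N(0, 1)` satisfies
`2φ(1) = √(2/(πe))`: for `ε ≤ 1`, comparing `φ` with `φ(1)` on `(-ε, ε)` gives
`q(ε) ≤ 1 - 2φ(1)ε`, and for `ε ≥ 1` the tail bound `q(ε) ≤ 2φ(ε)` suffices; in both cases
`q(ε) ≤ exp(-√(2/(πe)) ε)`. The second bound follows from the first via `1 - e⁻ˢ ≥ s/2` on `[0, 1]`.
-/

open MeasureTheory Set Metric Pointwise RealInnerProductSpace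

noncomputable section

/-- Standard Gaussian measure of a set in `ℝⁿ`. -/
def gauss {n : ℕ} (B : Set (EuclideanSpace ℝ (Fin n))) : ℝ :=
  ∫ x in B, (2 * Real.pi) ^ (-(n : ℝ) / 2) * Real.exp (-‖x‖ ^ 2 / 2)

/-- Solution set of `P₀(g)`: minimize `-g·x` over `Q`. -/
def sol0 {n : ℕ} (Q : Set (EuclideanSpace ℝ (Fin n))) (g : EuclideanSpace ℝ (Fin n)) :
    Set (EuclideanSpace ℝ (Fin n)) :=
  {x ∈ Q | ∀ y ∈ Q, -⟪g, x⟫ ≤ -⟪g, y⟫}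

/-- Solution set of `P_ε(g)`: minimize `-g·x + εψ(x)` over `Q` (here `dom ψ = ℝⁿ`). -/
def solReg {n : ℕ} (Q : Set (EuclideanSpace ℝ (Fin n))) (ψ : EuclideanSpace ℝ (Fin n) → ℝ)
    (ε : ℝ) (g : EuclideanSpace ℝ (Fin n)) : Set (EuclideanSpace ℝ (Fin n)) :=
  {x ∈ Q | ∀ y ∈ Q, -⟪g, x⟫ + ε * ψ x ≤ -⟪g, y⟫ + ε * ψ y}

/-- The exact regularization event: `P₀(g)` has a unique solution which also solves `P_ε(g)`. -/
def ER {n : ℕ} (Q : Set (EuclideanSpace ℝ (Fin n))) (ψ : EuclideanSpace ℝ (Fin n) → ℝ)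
    (ε : ℝ) : Set (EuclideanSpace ℝ (Fin n)) :=
  {g | ∃ z, sol0 Q g = {z} ∧ z ∈ solReg Q ψ ε g}

def Binf (n : ℕ) : Set (EuclideanSpace ℝ (Fin n)) := {x | ∀ i, |x i| ≤ 1}

open ProbabilityTheory Filter Topology

lemma Finset.sum_apply_update {ι M : Type*} [Fintype ι] [DecidableEq ι] [AddCommGroup M]
    {β : ι → Type*} (f : ∀ i, β i → M) (x : ∀ i, β i) (i : ι) (b : β i) :
    ∑ j, f j (Function.update x i b j) = ∑ j, f j (x j) - f i (x i) + f i b := by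
  simp only [Function.apply_update f x i b, Finset.sum_update_of_mem (Finset.mem_univ i)]
  rw [Finset.sum_eq_add_sum_sdiff_singleton_of_mem (Finset.mem_univ i) fun j => f j (x j)]
  abel

lemma inner_eq_sum {n : ℕ} (g x : EuclideanSpace ℝ (Fin n)) : ⟪g, x⟫ = ∑ i, g i * x i := by
  simp [PiLp.inner_apply, mul_comm]

lemma update_mem_Binf {n : ℕ} {z : EuclideanSpace ℝ (Fin n)} (hz : z ∈ Binf n) (i : Fin n)
    {t : ℝ} (ht : |t| ≤ 1) : WithLp.toLp 2 (Function.update z.ofLp i t) ∈ Binf n := by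
  intro j
  rcases eq_or_ne j i with rfl | hj
  · simpa using ht
  · simpa [hj] using hz j

lemma apply_le_of_forall_sum_le_Binf {n : ℕ} {f : Fin n → ℝ → ℝ}
    {z : EuclideanSpace ℝ (Fin n)} (hz : z ∈ Binf n)
    (hmin : ∀ y ∈ Binf n, ∑ j, f j (z j) ≤ ∑ j, f j (y j)) (i : Fin n) {t : ℝ} (ht : |t| ≤ 1) :
    f i (z i) ≤ f i t := by
  have := hmin _ (update_mem_Binf hz i ht)
  simp only [Finset.sum_apply_update] at this
  linarith

lemma apply_ne_zero_of_sol0_Binf_eq_singleton {n : ℕ} {g z : EuclideanSpace ℝ (Fin n)}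
    (hsol : sol0 (Binf n) g = {z}) (i : Fin n) : g i ≠ 0 := by
  have hz0 : z ∈ sol0 (Binf n) g := hsol ▸ rfl
  intro hgi
  have hupd (t : ℝ) (ht : |t| ≤ 1) : t = z i := by
    have hmem : WithLp.toLp 2 (Function.update z.ofLp i t) ∈ sol0 (Binf n) g :=
      ⟨update_mem_Binf hz0.1 i ht, fun y hy => by
        simpa [inner_eq_sum, Finset.sum_apply_update, hgi] using hz0.2 y hy⟩
    rw [hsol, mem_singleton_iff] at hmem
    simpa using congr_arg (· i) hmem
  linarith [hupd 1 (by norm_num), hupd (-1) (by norm_num)]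

lemma le_abs_of_mem_ER {n : ℕ} {ε : ℝ} {g : EuclideanSpace ℝ (Fin n)}
    (hg : g ∈ ER (Binf n) (fun x => ‖x‖ ^ 2 / 2) ε) (i : Fin n) : ε ≤ |g i| := by
  obtain ⟨z, hsol, hzB, hreg⟩ := hg
  have hz0 : z ∈ sol0 (Binf n) g := hsol ▸ rfl
  have hlin (t : ℝ) (ht : |t| ≤ 1) : g i * t ≤ g i * z i := by
    have := apply_le_of_forall_sum_le_Binf (f := fun j s => -(g j * s)) hzB
      (fun y hy => by simpa [inner_eq_sum] using hz0.2 y hy) i ht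
    linarith
  have hquad (t : ℝ) (ht : |t| ≤ 1) :
      -(g i * z i) + ε * z i ^ 2 / 2 ≤ -(g i * t) + ε * t ^ 2 / 2 :=
    apply_le_of_forall_sum_le_Binf (f := fun j s => -(g j * s) + ε * s ^ 2 / 2) hzB
      (fun y hy => by
        simpa [inner_eq_sum, EuclideanSpace.real_norm_sq_eq, Finset.sum_add_distrib,
          Finset.mul_sum, Finset.sum_div, mul_div_assoc] using hreg y hy) i ht
  have hgi := apply_ne_zero_of_sol0_Binf_eq_singleton hsol i
  by_contra! hlt
  have hε : 0 < ε := (abs_nonneg _).trans_lt hlt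
  have hzi : ε * z i = g i := by
    -- `g i / ε` is feasible and is the strict minimizer of the `i`-th regularized objective
    have hq := hquad (g i / ε)
      (by rw [abs_div, abs_of_pos hε]; exact ((div_lt_one hε).2 hlt).le)
    have hsq : (ε * z i - g i) ^ 2 =
        2 * ε * ((-(g i * z i) + ε * z i ^ 2 / 2) -
          (-(g i * (g i / ε)) + ε * (g i / ε) ^ 2 / 2)) := by
      field_simp
      ring
    have : (ε * z i - g i) ^ 2 ≤ 0 := hsq ▸ mul_nonpos_of_nonneg_of_nonpos (by positivity)
      (sub_nonpos.2 hq)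
    exact sub_eq_zero.1 (pow_eq_zero_iff two_ne_zero |>.1 (le_antisymm this (sq_nonneg _)))
  have hsign : |g i| ≤ g i * z i :=
    abs_le.2 ⟨by linarith [hlin (-1) (by norm_num)], by linarith [hlin 1 (by norm_num)]⟩
  have : ε * |g i| ≤ |g i| ^ 2 :=
    calc ε * |g i| ≤ ε * (g i * z i) := by gcongr
      _ = |g i| ^ 2 := by rw [sq_abs, ← hzi]; ring
  nlinarith [mul_pos (abs_pos.2 hgi) (sub_pos.2 hlt)]

lemma ER_subset_setOf_forall_mem_compl_Ioo {n : ℕ} (ε : ℝ) :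
    ER (Binf n) (fun x => ‖x‖ ^ 2 / 2) ε ⊆ {g | ∀ i, g i ∈ (Ioo (-ε) ε)ᶜ} :=
  fun _ hg i hi => (le_abs_of_mem_ER hg i).not_gt (abs_lt.2 hi)

lemma gaussianPDFReal_zero_one (t : ℝ) :
    gaussianPDFReal 0 1 t = (√(2 * Real.pi))⁻¹ * Real.exp (-t ^ 2 / 2) := by
  simp [gaussianPDFReal]

lemma two_mul_gaussianPDFReal_one :
    2 * gaussianPDFReal 0 1 1 = √(2 / (Real.pi * Real.exp 1)) := by
  rw [← Real.sqrt_sq (mul_nonneg zero_le_two (gaussianPDFReal_nonneg 0 1 1))]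
  congr 1
  rw [gaussianPDFReal_zero_one, mul_pow, mul_pow, inv_pow, Real.sq_sqrt (by positivity),
    ← Real.exp_nat_mul]
  norm_num [Real.exp_neg]
  field_simp
  ring

lemma mul_le_setIntegral_Ioo_gaussianPDFReal {ε : ℝ} (hε : 0 ≤ ε) (hε1 : ε ≤ 1) :
    √(2 / (Real.pi * Real.exp 1)) * ε ≤ ∫ t in Ioo (-ε) ε, gaussianPDFReal 0 1 t := by
  calc √(2 / (Real.pi * Real.exp 1)) * ε = ∫ _ in Ioo (-ε) ε, gaussianPDFReal 0 1 1 := by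
        rw [setIntegral_const, Real.volume_real_Ioo_of_le (by linarith), smul_eq_mul,
          ← two_mul_gaussianPDFReal_one]
        ring
    _ ≤ ∫ t in Ioo (-ε) ε, gaussianPDFReal 0 1 t := by
      refine setIntegral_mono_on (integrableOn_const measure_Ioo_lt_top.ne)
        (integrable_gaussianPDFReal 0 1).integrableOn measurableSet_Ioo fun t ht => ?_
      simp only [gaussianPDFReal_zero_one]
      gcongr ?_ * Real.exp ?_
      nlinarith [ht.1, ht.2]

lemma integrable_mul_gaussianPDFReal : Integrable fun t => t * gaussianPDFReal 0 1 t := by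
  refine ((integrable_mul_exp_neg_mul_sq one_half_pos).const_mul (√(2 * Real.pi))⁻¹).congr
    (ae_of_all _ fun t => ?_)
  simp only [gaussianPDFReal_zero_one]
  ring_nf

lemma setIntegral_Ioi_mul_gaussianPDFReal (ε : ℝ) :
    ∫ t in Ioi ε, t * gaussianPDFReal 0 1 t = gaussianPDFReal 0 1 ε := by
  have hderiv (x : ℝ) : HasDerivAt (fun t => -gaussianPDFReal 0 1 t)
      (x * gaussianPDFReal 0 1 x) x := by
    simp only [gaussianPDFReal_zero_one]
    have h : HasDerivAt (fun t : ℝ => -t ^ 2 / 2) (-x) x :=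
      ((hasDerivAt_pow 2 x).fun_neg.div_const 2).congr_deriv (by push_cast; ring)
    exact ((h.exp.const_mul _).fun_neg).congr_deriv (by ring)
  have hlim : Tendsto (fun t => -gaussianPDFReal 0 1 t) atTop (𝓝 0) := by
    have : Tendsto (fun t : ℝ => -t ^ 2 / 2) atTop atBot := by
      simp only [neg_div]
      exact tendsto_neg_atTop_atBot.comp
        ((tendsto_pow_atTop two_ne_zero).atTop_div_const two_pos)
    simpa [gaussianPDFReal_zero_one] using
      ((Real.tendsto_exp_atBot.comp this).const_mul (√(2 * Real.pi))⁻¹).neg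
  simpa using integral_Ioi_of_hasDerivAt_of_tendsto' (fun x _ => hderiv x)
    integrable_mul_gaussianPDFReal.integrableOn hlim

lemma setIntegral_compl_Ioo_gaussianPDFReal_le {ε : ℝ} (hε : 1 ≤ ε) :
    ∫ t in (Ioo (-ε) ε)ᶜ, gaussianPDFReal 0 1 t ≤ 2 * gaussianPDFReal 0 1 ε := by
  have hint := integrable_gaussianPDFReal 0 1
  have hcompl : (Ioo (-ε) ε)ᶜ = Iic (-ε) ∪ Ici ε := by
    ext t
    simp only [mem_compl_iff, mem_Ioo, not_and_or, not_lt, mem_union, mem_Iic, mem_Ici]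
  have hdisj : Disjoint (Iic (-ε)) (Ici ε) :=
    Iic_disjoint_Ici.2 (by linarith)
  have hsymm : ∫ t in Iic (-ε), gaussianPDFReal 0 1 t = ∫ t in Ioi ε, gaussianPDFReal 0 1 t := by
    rw [← integral_comp_neg_Ioi]
    simp [gaussianPDFReal_zero_one]
  have htail : ∫ t in Ioi ε, gaussianPDFReal 0 1 t ≤ gaussianPDFReal 0 1 ε := by
    rw [← setIntegral_Ioi_mul_gaussianPDFReal]
    refine setIntegral_mono_on hint.integrableOn integrable_mul_gaussianPDFReal.integrableOn
      measurableSet_Ioi fun t ht => ?_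
    exact le_mul_of_one_le_left (gaussianPDFReal_nonneg 0 1 t) (hε.trans (le_of_lt ht))
  rw [hcompl, setIntegral_union hdisj measurableSet_Ici hint.integrableOn hint.integrableOn,
    hsymm, integral_Ici_eq_integral_Ioi]
  linarith

lemma sqrt_two_div_pi_exp_le_half : √(2 / (Real.pi * Real.exp 1)) ≤ 1 / 2 := by
  rw [Real.sqrt_le_left (by norm_num), div_le_iff₀ (by positivity)]
  nlinarith [Real.pi_gt_d2, Real.exp_one_gt_d9]

lemma setIntegral_compl_Ioo_gaussianPDFReal_le_exp {ε : ℝ} (hε : 0 ≤ ε) :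
    ∫ t in (Ioo (-ε) ε)ᶜ, gaussianPDFReal 0 1 t ≤
      Real.exp (-(√(2 / (Real.pi * Real.exp 1)) * ε)) := by
  set c := √(2 / (Real.pi * Real.exp 1))
  rcases le_total ε 1 with hε1 | hε1
  · have htotal := integral_add_compl measurableSet_Ioo (integrable_gaussianPDFReal 0 1)
      (s := Ioo (-ε) ε)
    rw [integral_gaussianPDFReal_eq_one 0 one_ne_zero] at htotal
    linarith [mul_le_setIntegral_Ioo_gaussianPDFReal hε hε1, Real.add_one_le_exp (-(c * ε))]
  · have hsqrt : 2 ≤ √(2 * Real.pi) := Real.le_sqrt_of_sq_le (by nlinarith [Real.pi_gt_three])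
    calc ∫ t in (Ioo (-ε) ε)ᶜ, gaussianPDFReal 0 1 t ≤ 2 * gaussianPDFReal 0 1 ε :=
          setIntegral_compl_Ioo_gaussianPDFReal_le hε1
      _ = 2 / √(2 * Real.pi) * Real.exp (-ε ^ 2 / 2) := by
          rw [gaussianPDFReal_zero_one]; ring
      _ ≤ 1 * Real.exp (-ε ^ 2 / 2) := by
          gcongr
          exact (div_le_one (by positivity)).2 hsqrt
      _ ≤ Real.exp (-(c * ε)) := by
          rw [one_mul]
          gcongr
          nlinarith [sqrt_two_div_pi_exp_le_half]

lemma half_le_one_sub_exp_neg {s : ℝ} (hs0 : 0 ≤ s) (hs1 : s ≤ 1) :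
    s / 2 ≤ 1 - Real.exp (-s) := by
  have h : Real.exp (-s) * (1 + s) ≤ 1 := by
    calc Real.exp (-s) * (1 + s) ≤ Real.exp (-s) * Real.exp s := by
          gcongr; linarith [Real.add_one_le_exp s]
      _ = 1 := by rw [← Real.exp_add, neg_add_cancel, Real.exp_zero]
  nlinarith [Real.exp_pos (-s), mul_nonneg hs0 (sub_nonneg.2 hs1)]

lemma sqrt_two_div_pi_exp_mul_sqrt_two_pi_exp :
    √(2 / (Real.pi * Real.exp 1)) * √(2 * Real.pi * Real.exp 1) = 2 := by
  rw [← Real.sqrt_mul (by positivity),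
    show 2 / (Real.pi * Real.exp 1) * (2 * Real.pi * Real.exp 1) = 2 ^ 2 by field_simp,
    Real.sqrt_sq zero_le_two]

lemma sqrt_two_div_pi_exp_mul_le_half {n : ℕ} {ε : ℝ}
    (hε : ε ≤ √(Real.pi * Real.exp 1 / 2) / (2 * n)) :
    √(2 / (Real.pi * Real.exp 1)) * n * ε ≤ 1 / 2 := by
  have hinv : √(2 / (Real.pi * Real.exp 1)) * √(Real.pi * Real.exp 1 / 2) = 1 := by
    rw [← Real.sqrt_mul (by positivity), div_mul_div_comm, mul_comm 2,
      div_self (by positivity), Real.sqrt_one]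
  have hnε : n * ε ≤ √(Real.pi * Real.exp 1 / 2) / 2 := by
    rcases Nat.eq_zero_or_pos n with rfl | hn
    · simp only [CharP.cast_eq_zero, zero_mul]
      positivity
    · rw [le_div_iff₀ (by positivity)] at hε
      linarith
  calc √(2 / (Real.pi * Real.exp 1)) * n * ε = √(2 / (Real.pi * Real.exp 1)) * (n * ε) := by ring
    _ ≤ √(2 / (Real.pi * Real.exp 1)) * (√(Real.pi * Real.exp 1 / 2) / 2) := by gcongr
    _ = 1 / 2 := by rw [mul_div_assoc', hinv]

lemma gauss_density_eq_prod {n : ℕ} (x : EuclideanSpace ℝ (Fin n)) :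
    (2 * Real.pi) ^ (-(n : ℝ) / 2) * Real.exp (-‖x‖ ^ 2 / 2) =
      ∏ i, gaussianPDFReal 0 1 (x i) := by
  simp only [gaussianPDFReal_zero_one, Finset.prod_mul_distrib, Finset.prod_const,
    Finset.card_univ, Fintype.card_fin, ← Real.exp_sum, EuclideanSpace.real_norm_sq_eq,
    neg_div, Finset.sum_div, Finset.sum_neg_distrib]
  rw [Real.sqrt_eq_rpow, ← Real.rpow_neg (by positivity), ← Real.rpow_natCast,
    ← Real.rpow_mul (by positivity)]
  ring_nf

lemma integrable_gauss_density {n : ℕ} :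
    Integrable fun x : EuclideanSpace ℝ (Fin n) =>
      (2 * Real.pi) ^ (-(n : ℝ) / 2) * Real.exp (-‖x‖ ^ 2 / 2) := by
  simp only [gauss_density_eq_prod]
  exact (PiLp.volume_preserving_ofLp (Fin n)).integrable_comp_emb
    (MeasurableEquiv.toLp 2 _).symm.measurableEmbedding |>.2
    (Integrable.fintype_prod fun _ => integrable_gaussianPDFReal 0 1)

lemma setIntegral_setOf_forall_mem_prod {n : ℕ} (F : ℝ → ℝ) (S : Set ℝ) :
    ∫ x in {x : EuclideanSpace ℝ (Fin n) | ∀ i, x i ∈ S}, ∏ i, F (x i) =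
      (∫ t in S, F t) ^ n := by
  have hpre : WithLp.toLp 2 ⁻¹' {x : EuclideanSpace ℝ (Fin n) | ∀ i, x i ∈ S} =
      univ.pi fun _ => S := by
    ext; simp
  rw [← (PiLp.volume_preserving_toLp (Fin n)).setIntegral_preimage_emb
    (MeasurableEquiv.toLp 2 (Fin n → ℝ)).measurableEmbedding, hpre, volume_pi,
    Measure.restrict_pi_pi]
  simpa using integral_fintype_prod_eq_pow (ι := Fin n) F (μ := volume.restrict S)

lemma gauss_setOf_forall_mem {n : ℕ} (S : Set ℝ) :
    gauss {x : EuclideanSpace ℝ (Fin n) | ∀ i, x i ∈ S} =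
      (∫ t in S, gaussianPDFReal 0 1 t) ^ n := by
  simp only [gauss, gauss_density_eq_prod, setIntegral_setOf_forall_mem_prod]

lemma gauss_univ {n : ℕ} : gauss (univ : Set (EuclideanSpace ℝ (Fin n))) = 1 := by
  rw [show univ = {x : EuclideanSpace ℝ (Fin n) | ∀ i, x i ∈ univ} by ext; simp,
    gauss_setOf_forall_mem, Measure.restrict_univ,
    integral_gaussianPDFReal_eq_one 0 one_ne_zero, one_pow]

lemma gauss_compl {n : ℕ} {B : Set (EuclideanSpace ℝ (Fin n))} (hB : MeasurableSet B) :
    gauss Bᶜ = 1 - gauss B := by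
  rw [← gauss_univ, eq_sub_iff_add_eq', gauss, gauss, gauss, Measure.restrict_univ]
  exact integral_add_compl hB integrable_gauss_density

lemma gauss_mono {n : ℕ} {s t : Set (EuclideanSpace ℝ (Fin n))} (hst : s ⊆ t) :
    gauss s ≤ gauss t :=
  setIntegral_mono_set integrable_gauss_density.integrableOn
    (ae_of_all _ fun _ => by positivity) hst.eventuallyLE

lemma measurableSet_setOf_forall_mem {n : ℕ} {S : Set ℝ} (hS : MeasurableSet S) :
    MeasurableSet {x : EuclideanSpace ℝ (Fin n) | ∀ i, x i ∈ S} := by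
  simp only [ofPred_forall]
  exact MeasurableSet.iInter fun i => hS.preimage (by fun_prop)

lemma one_sub_exp_le_gauss_compl_ER {n : ℕ} {ε : ℝ} (hε : 0 ≤ ε) :
    1 - Real.exp (-(√(2 / (Real.pi * Real.exp 1)) * n * ε)) ≤
      gauss (ER (Binf n) (fun x => ‖x‖ ^ 2 / 2) ε)ᶜ := by
  set c := √(2 / (Real.pi * Real.exp 1))
  calc 1 - Real.exp (-(c * n * ε)) = 1 - Real.exp (-(c * ε)) ^ n := by
        rw [← Real.exp_nat_mul]; ring_nf
    _ ≤ 1 - (∫ t in (Ioo (-ε) ε)ᶜ, gaussianPDFReal 0 1 t) ^ n := by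
        gcongr
        · exact setIntegral_nonneg measurableSet_Ioo.compl fun t _ =>
            gaussianPDFReal_nonneg 0 1 t
        · exact setIntegral_compl_Ioo_gaussianPDFReal_le_exp hε
    _ = gauss {g : EuclideanSpace ℝ (Fin n) | ∀ i, g i ∈ (Ioo (-ε) ε)ᶜ}ᶜ := by
        rw [gauss_compl (measurableSet_setOf_forall_mem measurableSet_Ioo.compl),
          gauss_setOf_forall_mem]
    _ ≤ _ := gauss_mono (compl_subset_compl.2 (ER_subset_setOf_forall_mem_compl_Ioo ε))

/-- Lower bounds on the failure probability of exact regularization for the `ℓ∞` ball with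
quadratic regularization. -/
theorem stmt16 {n : ℕ} (ε : ℝ) (hε : 0 ≤ ε) :
    1 - Real.exp (-(Real.sqrt (2 / (Real.pi * Real.exp 1)) * n * ε)) ≤
      gauss (ER (Binf n) (fun x => ‖x‖ ^ 2 / 2) ε)ᶜ ∧
    (ε ≤ Real.sqrt (Real.pi * Real.exp 1 / 2) / (2 * n) →
      n * ε / Real.sqrt (2 * Real.pi * Real.exp 1) ≤
        gauss (ER (Binf n) (fun x => ‖x‖ ^ 2 / 2) ε)ᶜ) := by
  have hbound := one_sub_exp_le_gauss_compl_ER (n := n) hε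
  refine ⟨hbound, fun hsmall => ?_⟩
  calc n * ε / √(2 * Real.pi * Real.exp 1) = √(2 / (Real.pi * Real.exp 1)) * n * ε / 2 := by
        rw [div_eq_div_iff (by positivity) two_ne_zero]
        linear_combination -(n * ε) * sqrt_two_div_pi_exp_mul_sqrt_two_pi_exp
    _ ≤ 1 - Real.exp (-(√(2 / (Real.pi * Real.exp 1)) * n * ε)) :=
        half_le_one_sub_exp_neg (by positivity)
          ((sqrt_two_div_pi_exp_mul_le_half hsmall).trans (by norm_num))
    _ ≤ _ := hbound
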